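/- Let 0 < C < 1 and ϑ > 1. In the Beltrami–Poincaré half-plane model, ∫₁^ϑ ∫_{−(C/√(1−C²))√(y²−1)}^{(C/√(1−C²))√(y²−1)} y^{−2} dx dy = (2C/√(1−C²))·( −√(ϑ²−1)/ϑ + artanh(√(ϑ²−1)/ϑ) ), and consequently (2C/√(1−C²))·ln ϑ minus this quantity tends to (2C/√(1−C²))·(1 − ln 2) as ϑ → +∞. (The first quantity is the hyperbolic area of the truncated h-elliptic parabolic disk Ě^C_ϑ = {(x,y) : ((1−C²)/C²)x² − y² + 1 ≤ 0, 1 ≤ y ≤ ϑ}, and (2C/√(1−C²)) ln ϑ is the hyperbolic area of Ď^C_ϑ = {(x,y) : ((1−C²)/C²)x² − y² ≤ 0, 1 ≤ y ≤ ϑ}.) -/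

import Mathlib

/-!
Substituting `y = cosh u`, the integrand `√(y² - 1) / y²` becomes `tanh² u = 1 - cosh⁻² u`, so the
area is `2k (arcosh ϑ - tanh (arcosh ϑ))` with `k = C / √(1 - C²)`, and
`artanh (√(ϑ² - 1) / ϑ) = artanh (tanh (arcosh ϑ)) = arcosh ϑ`. As `ϑ → ∞`,
`tanh (arcosh ϑ) → 1` and `arcosh ϑ - log ϑ = log (1 + tanh (arcosh ϑ)) → log 2`.
-/

open Filter

noncomputable def artanh (x : ℝ) : ℝ := Real.log ((1 + x) / (1 - x)) / 2

open Real hiding artanh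
open Set intervalIntegral Topology

theorem artanh_eq_real_artanh {x : ℝ} (hx : x ∈ Icc (-1) 1) : artanh x = Real.artanh x := by
  rw [Real.artanh_eq_half_log hx, artanh]
  ring

theorem artanh_sqrt_sq_sub_one_div {y : ℝ} (hy : 1 ≤ y) :
    artanh (√(y ^ 2 - 1) / y) = arcosh y := by
  rw [← tanh_arcosh hy, artanh_eq_real_artanh ⟨(neg_one_lt_tanh _).le, (tanh_lt_one _).le⟩,
    Real.artanh_tanh]

theorem hasDerivAt_sqrt_sq_sub_one_div {y : ℝ} (hy : 1 < y) :
    HasDerivAt (fun y => √(y ^ 2 - 1) / y) (y ^ 2 * √(y ^ 2 - 1))⁻¹ y := by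
  have hpos : 0 < y ^ 2 - 1 := by nlinarith
  have hs : 0 < √(y ^ 2 - 1) := sqrt_pos.2 hpos
  have h := (((hasDerivAt_pow 2 y).sub_const 1).sqrt hpos.ne').div (hasDerivAt_id y)
    (zero_lt_one.trans hy).ne'
  refine h.congr_deriv ?_
  simp only [id, Nat.cast_ofNat]
  field_simp
  linear_combination -sq_sqrt hpos.le

theorem integral_sqrt_sq_sub_one_div_sq {ϑ : ℝ} (hϑ : 1 ≤ ϑ) :
    ∫ y in (1 : ℝ)..ϑ, √(y ^ 2 - 1) / y ^ 2 = arcosh ϑ - √(ϑ ^ 2 - 1) / ϑ := by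
  have hcont : ContinuousOn (fun y => arcosh y - √(y ^ 2 - 1) / y) (Icc 1 ϑ) :=
    (continuousOn_arcosh.mono Icc_subset_Ici_self).sub <| ContinuousOn.div (by fun_prop)
      continuousOn_id fun y hy => (zero_lt_one.trans_le hy.1).ne'
  have hderiv : ∀ y ∈ Ioo 1 ϑ, HasDerivAt (fun y => arcosh y - √(y ^ 2 - 1) / y)
      (√(y ^ 2 - 1) / y ^ 2) y := by
    intro y hy
    have hpos : 0 < y ^ 2 - 1 := by nlinarith [hy.1]
    have hs : 0 < √(y ^ 2 - 1) := sqrt_pos.2 hpos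
    have hy0 : y ≠ 0 := (zero_lt_one.trans hy.1).ne'
    refine ((hasDerivAt_arcosh hy.1).sub (hasDerivAt_sqrt_sq_sub_one_div hy.1)).congr_deriv ?_
    field_simp
    linear_combination -sq_sqrt hpos.le
  have hint : IntervalIntegrable (fun y => √(y ^ 2 - 1) / y ^ 2) MeasureTheory.volume 1 ϑ := by
    refine ContinuousOn.intervalIntegrable (ContinuousOn.div (by fun_prop) (by fun_prop) ?_)
    intro y hy
    rw [uIcc_of_le hϑ] at hy
    exact pow_ne_zero 2 (zero_lt_one.trans_le hy.1).ne'
  rw [integral_eq_sub_of_hasDerivAt_of_le hϑ hcont hderiv hint, arcosh_zero]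
  simp

theorem integral_integral_rpow_neg_two (k ϑ : ℝ) (hϑ : 1 ≤ ϑ) :
    ∫ y in (1 : ℝ)..ϑ, ∫ _ in -(k * √(y ^ 2 - 1))..k * √(y ^ 2 - 1), y ^ (-2 : ℝ) =
      2 * k * (arcosh ϑ - √(ϑ ^ 2 - 1) / ϑ) := by
  have inner : ∀ y : ℝ, ∫ _ in -(k * √(y ^ 2 - 1))..k * √(y ^ 2 - 1), y ^ (-2 : ℝ) =
      2 * k * (√(y ^ 2 - 1) / y ^ 2) := by
    intro y
    rw [integral_const, smul_eq_mul, rpow_neg_ofNat, zpow_neg, zpow_ofNat]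
    ring
  simp_rw [inner]
  rw [integral_const_mul, integral_sqrt_sq_sub_one_div_sq hϑ]

theorem tendsto_sqrt_sq_sub_one_div_atTop :
    Tendsto (fun y : ℝ => √(y ^ 2 - 1) / y) atTop (𝓝 1) := by
  have h : Tendsto (fun y : ℝ => √(1 - (y ^ 2)⁻¹)) atTop (𝓝 1) := by
    have := ((tendsto_pow_atTop two_ne_zero).inv_tendsto_atTop.const_sub 1).sqrt
    simpa using this
  refine h.congr' ?_
  filter_upwards [eventually_gt_atTop 0] with y hy
  rw [← sqrt_sq hy.le, ← sqrt_div' _ (sq_nonneg y), sqrt_sq hy.le]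
  congr 1
  field_simp

theorem arcosh_sub_log {y : ℝ} (hy : 0 < y) : arcosh y - log y = log (1 + √(y ^ 2 - 1) / y) := by
  rw [arcosh, ← log_div (by positivity) hy.ne', add_div, div_self hy.ne']

theorem tendsto_arcosh_sub_log_atTop : Tendsto (fun y => arcosh y - log y) atTop (𝓝 (log 2)) := by
  have h := ((continuousAt_log (by norm_num : (1 + 1 : ℝ) ≠ 0)).tendsto.comp
    (tendsto_sqrt_sq_sub_one_div_atTop.const_add 1))
  rw [one_add_one_eq_two] at h
  refine h.congr' ?_
  filter_upwards [eventually_gt_atTop 0] with y hy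
  exact (arcosh_sub_log hy).symm

theorem bph_area_difference_general (C : ℝ) :
    (∀ ϑ : ℝ, 1 < ϑ →
      (∫ y in (1:ℝ)..ϑ,
          ∫ x in (-(C / Real.sqrt (1 - C ^ 2) * Real.sqrt (y ^ 2 - 1)))..(C / Real.sqrt (1 - C ^ 2) * Real.sqrt (y ^ 2 - 1)),
            (y:ℝ) ^ (-(2:ℝ))) =
        2 * C / Real.sqrt (1 - C ^ 2) *
          (-(Real.sqrt (ϑ ^ 2 - 1) / ϑ) + artanh (Real.sqrt (ϑ ^ 2 - 1) / ϑ))) ∧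
    Tendsto (fun ϑ : ℝ =>
        2 * C / Real.sqrt (1 - C ^ 2) * Real.log ϑ -
          2 * C / Real.sqrt (1 - C ^ 2) *
            (-(Real.sqrt (ϑ ^ 2 - 1) / ϑ) + artanh (Real.sqrt (ϑ ^ 2 - 1) / ϑ)))
      atTop (nhds (2 * C / Real.sqrt (1 - C ^ 2) * (1 - Real.log 2))) := by
  set k := C / √(1 - C ^ 2)
  have hk : 2 * C / √(1 - C ^ 2) = 2 * k := mul_div_assoc 2 C _
  simp only [hk]
  refine ⟨fun ϑ hϑ => ?_, ?_⟩
  · rw [integral_integral_rpow_neg_two k ϑ hϑ.le, artanh_sqrt_sq_sub_one_div hϑ.le]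
    ring
  · refine ((tendsto_sqrt_sq_sub_one_div_atTop.sub tendsto_arcosh_sub_log_atTop).const_mul
      (2 * k)).congr' ?_
    filter_upwards [eventually_ge_atTop 1] with ϑ hϑ
    rw [artanh_sqrt_sq_sub_one_div hϑ]
    ring

theorem bph_area_difference (C : ℝ) (hC0 : 0 < C) (hC1 : C < 1) :
    (∀ ϑ : ℝ, 1 < ϑ →
      (∫ y in (1:ℝ)..ϑ,
          ∫ x in (-(C / Real.sqrt (1 - C ^ 2) * Real.sqrt (y ^ 2 - 1)))..(C / Real.sqrt (1 - C ^ 2) * Real.sqrt (y ^ 2 - 1)),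
            (y:ℝ) ^ (-(2:ℝ))) =
        2 * C / Real.sqrt (1 - C ^ 2) *
          (-(Real.sqrt (ϑ ^ 2 - 1) / ϑ) + artanh (Real.sqrt (ϑ ^ 2 - 1) / ϑ))) ∧
    Tendsto (fun ϑ : ℝ =>
        2 * C / Real.sqrt (1 - C ^ 2) * Real.log ϑ -
          2 * C / Real.sqrt (1 - C ^ 2) *
            (-(Real.sqrt (ϑ ^ 2 - 1) / ϑ) + artanh (Real.sqrt (ϑ ^ 2 - 1) / ϑ)))
      atTop (nhds (2 * C / Real.sqrt (1 - C ^ 2) * (1 - Real.log 2))) :=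
  bph_area_difference_general C
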